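/- Define the derivation D on ℂ(α₀,...,α₄,f₀,...,f₄) by D(f_j) = f_j(f_{j+1}-f_{j+2}+f_{j+3}-f_{j+4}) + α_j (indices mod 5), D(α_j) = 0, and the automorphism s₀ by s₀(α₀) = -α₀, s₀(α₁) = α₁+α₀, s₀(α₄) = α₄+α₀, s₀(α_j) = α_j otherwise; s₀(f₀) = f₀, s₀(f₁) = f₁ + α₀/f₀, s₀(f₄) = f₄ - α₀/f₀, s₀(f_j) = f_j otherwise. Then D ∘ s₀ = s₀ ∘ D on each generator f_j, j = 0,...,4. -/
import Mathlib


/-- The field ℂ(α₀,…,α₄, f₀,…,f₄) of rational functions. -/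
noncomputable abbrev K : Type := FractionRing (MvPolynomial (Fin 10) ℂ)

noncomputable def gen (i : Fin 10) : K :=
  algebraMap (MvPolynomial (Fin 10) ℂ) K (MvPolynomial.X i)

/-- α₀, …, α₄. -/
noncomputable def a (i : Fin 5) : K := gen (Fin.castAdd 5 i)

/-- f₀, …, f₄ (indices taken mod 5). -/
noncomputable def f (i : Fin 5) : K := gen (Fin.natAdd 5 i)

set_option maxHeartbeats 1000000 in
set_option synthInstance.maxHeartbeats 1000000 in
/-- the A₄⁽¹⁾ Noumi–Yamada derivation commutes with the
Bäcklund transformation s₀ on every generator fⱼ. -/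
theorem stmt17 (D : Derivation ℂ K K) (s₀ : K ≃ₐ[ℂ] K)
    (hD : ∀ j : Fin 5,
      D (f j) = f j * (f (j + 1) - f (j + 2) + f (j + 3) - f (j + 4)) + a j)
    (hDa : ∀ j : Fin 5, D (a j) = 0)
    (h0a0 : s₀ (a 0) = -a 0) (h0a1 : s₀ (a 1) = a 1 + a 0)
    (h0a4 : s₀ (a 4) = a 4 + a 0) (h0a2 : s₀ (a 2) = a 2) (h0a3 : s₀ (a 3) = a 3)
    (h0f0 : s₀ (f 0) = f 0) (h0f1 : s₀ (f 1) = f 1 + a 0 / f 0)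
    (h0f4 : s₀ (f 4) = f 4 - a 0 / f 0) (h0f2 : s₀ (f 2) = f 2)
    (h0f3 : s₀ (f 3) = f 3) :
    ∀ j : Fin 5, D (s₀ (f j)) = s₀ (D (f j)) := by
  have hf0 : f 0 ≠ 0 := by
    unfold f gen
    simp [IsFractionRing.to_map_eq_zero_iff, MvPolynomial.X_ne_zero]
  have hD0 : D (f 0) = f 0 * (f 1 - f 2 + f 3 - f 4) + a 0 := hD 0
  have hD1 : D (f 1) = f 1 * (f 2 - f 3 + f 4 - f 0) + a 1 := hD 1
  have hD2 : D (f 2) = f 2 * (f 3 - f 4 + f 0 - f 1) + a 2 := hD 2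
  have hD3 : D (f 3) = f 3 * (f 4 - f 0 + f 1 - f 2) + a 3 := hD 3
  have hD4 : D (f 4) = f 4 * (f 0 - f 1 + f 2 - f 3) + a 4 := hD 4
  have hq : D (a 0 / f 0) = (f 0)⁻¹ ^ 2 * (f 0 * D (a 0) - a 0 * D (f 0)) := by
    rw [Derivation.leibniz_div]; simp [smul_eq_mul]
  rw [hDa 0, hD0] at hq
  intro j
  fin_cases j
  · show D (s₀ (f 0)) = s₀ (D (f 0))
    rw [h0f0, hD0]
    simp only [map_add, map_mul, map_sub, h0f0, h0f1, h0f2, h0f3, h0f4, h0a0]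
    field_simp
    ring
  · show D (s₀ (f 1)) = s₀ (D (f 1))
    rw [h0f1, map_add, hq, hD1]
    simp only [map_add, map_mul, map_sub, h0f0, h0f1, h0f2, h0f3, h0f4, h0a1]
    field_simp
    ring
  · show D (s₀ (f 2)) = s₀ (D (f 2))
    rw [h0f2, hD2]
    simp only [map_add, map_mul, map_sub, h0f0, h0f1, h0f2, h0f3, h0f4, h0a2]
    field_simp
    ring
  · show D (s₀ (f 3)) = s₀ (D (f 3))
    rw [h0f3, hD3]
    simp only [map_add, map_mul, map_sub, h0f0, h0f1, h0f2, h0f3, h0f4, h0a3]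
    field_simp
    ring
  · show D (s₀ (f 4)) = s₀ (D (f 4))
    rw [h0f4, map_sub, hq, hD4]
    simp only [map_add, map_mul, map_sub, h0f0, h0f1, h0f2, h0f3, h0f4, h0a4]
    field_simp
    ring
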